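/- arXiv:1603.04043 — 6 statements merged into one kernel-verified Lean document; each statement's English description precedes it below -/
import Mathlib

section
/- Let μ : [0,1]^n → ℝ be a function that is monotone (say, nondecreasing) separately in each of its n variables and continuous separately in each variable. Then μ is jointly continuous on [0,1]^n. -/
/-!
Induct on the number of variables, splitting off the first one. For `f t x` monotone and
continuous in `t` and continuous in `x`, joint continuity at `(t₀, x₀)` is a sandwich: pick
`l ≤ t₀ ≤ u` with `f l x₀`, `f u x₀` close to `f t₀ x₀` and `[l, u]` a neighbourhood of `t₀`;
near `x₀` the functions `f l ·` and `f u ·` stay close, and by monotonicity `f t x` lies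
between them for `t ∈ [l, u]`.
-/

open Filter Topology Set

section SeparatelyContinuous

variable {X Y Z : Type*} [TopologicalSpace X]
  [TopologicalSpace Y] [LinearOrder Y] [OrderTopology Y]
  [TopologicalSpace Z] [LinearOrder Z] [OrderTopology Z]
  {f : Y → X → Z}

theorem eventually_lt_uncurry_of_monotone_left (hmono : ∀ x, Monotone (f · x))
    (hcont_left : ∀ x, Continuous (f · x)) (hcont_right : ∀ t, Continuous (f t))
    {t₀ : Y} {x₀ : X} {a : Z} (ha : a < f t₀ x₀) :
    ∀ᶠ p in 𝓝 (t₀, x₀), a < Function.uncurry f p := by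
  have hS : {t | a < f t x₀} ∈ 𝓝 t₀ :=
    (hcont_left x₀).continuousAt.eventually (lt_mem_nhds ha)
  obtain ⟨l, hl, hIci⟩ : ∃ l, a < f l x₀ ∧ Ici l ∈ 𝓝 t₀ := by
    by_cases h : ∃ l < t₀, a < f l x₀
    · obtain ⟨l, hlt, hl⟩ := h
      exact ⟨l, hl, mem_of_superset (Ioi_mem_nhds hlt) Ioi_subset_Ici_self⟩
    · push Not at h
      exact ⟨t₀, ha, mem_of_superset hS fun t ht =>
        not_lt.1 fun htt => (h t htt).not_gt ht⟩
  have hx : ∀ᶠ x in 𝓝 x₀, a < f l x :=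
    (hcont_right l).continuousAt.eventually (lt_mem_nhds hl)
  filter_upwards [prod_mem_nhds hIci hx] with ⟨t, x⟩ ⟨ht, hx⟩ using hx.trans_le (hmono x ht)

theorem continuous_uncurry_of_monotone_left (hmono : ∀ x, Monotone (f · x))
    (hcont_left : ∀ x, Continuous (f · x)) (hcont_right : ∀ t, Continuous (f t)) :
    Continuous (Function.uncurry f) := by
  refine continuous_iff_continuousAt.2 fun ⟨t₀, x₀⟩ =>
    tendsto_order.2 ⟨fun a ha => ?_, fun b hb => ?_⟩
  · exact eventually_lt_uncurry_of_monotone_left hmono hcont_left hcont_right ha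
  · exact eventually_lt_uncurry_of_monotone_left
      (f := fun (t : Yᵒᵈ) x => OrderDual.toDual (f t x))
      (fun x => (hmono x).dual) hcont_left hcont_right (a := OrderDual.toDual b) hb

end SeparatelyContinuous

theorem continuous_of_monotone_of_continuous_update {Y Z : Type*}
    [TopologicalSpace Y] [LinearOrder Y] [OrderTopology Y]
    [TopologicalSpace Z] [LinearOrder Z] [OrderTopology Z] :
    ∀ {n : ℕ} {μ : (Fin n → Y) → Z},
      (∀ j x, Monotone fun y => μ (Function.update x j y)) →
      (∀ j x, Continuous fun y => μ (Function.update x j y)) → Continuous μ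
  | 0, μ, _, _ => continuous_of_const fun _ _ => congrArg μ (Subsingleton.elim _ _)
  | n + 1, μ, hmono, hcont => by
    set f : Y → (Fin n → Y) → Z := fun t y => μ (Fin.cons t y)
    have hfirst : ∀ s y, (f · y) = fun t => μ (Function.update (Fin.cons s y) 0 t) := by
      simp [f, Fin.update_cons_zero]
    have hrest : ∀ t j y, (fun s => f t (Function.update y j s)) =
        fun s => μ (Function.update (Fin.cons t y) j.succ s) := by
      simp [f, Fin.cons_update]
    have hf : Continuous (Function.uncurry f) := by
      refine continuous_uncurry_of_monotone_left (fun y => ?_) (fun y => ?_) fun t => ?_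
      · exact fun t₁ _ h => by rw [hfirst t₁ y]; exact hmono 0 _ h
      · exact continuous_iff_continuousAt.2 fun t₀ => by
          rw [hfirst t₀ y]; exact (hcont 0 _).continuousAt
      · exact continuous_of_monotone_of_continuous_update
          (fun j y => hrest t j y ▸ hmono j.succ _) (fun j y => hrest t j y ▸ hcont j.succ _)
    have hμ : μ = Function.uncurry f ∘ fun x => (x 0, Fin.tail x) := by
      funext x
      simp [f, Fin.cons_self_tail]
    rw [hμ]
    exact hf.comp ((continuous_apply 0).prodMk (continuous_pi fun j => continuous_apply _))

/-- A function on `[0,1]^n` that is nondecreasing in each variable separately and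
continuous in each variable separately is jointly continuous. -/
theorem stmt_0 (n : ℕ) (μ : (Fin n → Set.Icc (0:ℝ) 1) → ℝ)
    (hmono : ∀ (j : Fin n) (x : Fin n → Set.Icc (0:ℝ) 1),
      Monotone (fun y => μ (Function.update x j y)))
    (hcont : ∀ (j : Fin n) (x : Fin n → Set.Icc (0:ℝ) 1),
      Continuous (fun y => μ (Function.update x j y))) :
    Continuous μ :=
  continuous_of_monotone_of_continuous_update hmono hcont
end

section
/- Let ψ₁, ψ₂ : 𝔻 → 𝔻 be holomorphic self-maps of the unit disk and let σ ∈ ∂𝔻 be a regular contact point of the composition ψ₂ ∘ ψ₁, meaning liminf_{z→σ} (1 − |ψ₂(ψ₁(z))|)/(1 − |z|) < +∞. Then σ is a regular contact point of ψ₁, i.e. liminf_{z→σ} (1 − |ψ₁(z)|)/(1 − |z|) < +∞. -/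
/-!
Write `a = ψ₂ 0` and let `φ_a(z) = (z - a) / (1 - conj a z)` be the disk automorphism sending `a`
to `0`. The Schwarz lemma applied to `φ_a ∘ ψ₂` together with the identity
`1 - |φ_a z|² = (1 - |a|²)(1 - |z|²) / |1 - conj a z|²` gives, for every `w ∈ 𝔻`,
`1 - |w| ≤ K (1 - |ψ₂ w|)` with `K = 2 (1 + |a|) / (1 - |a|)`. Taking `w = ψ₁ z`, the Julia quotient
of `ψ₁` is at most `K` times that of `ψ₂ ∘ ψ₁`, so finiteness of the liminf passes from `ψ₂ ∘ ψ₁`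
to `ψ₁`.
-/

open Filter Metric Complex ComplexConjugate

namespace Complex

noncomputable def diskMobius (a z : ℂ) : ℂ := (z - a) / (1 - conj a * z)

theorem sq_norm_one_sub_conj_mul_sub_sq_norm_sub (a z : ℂ) :
    ‖1 - conj a * z‖ ^ 2 - ‖z - a‖ ^ 2 = (1 - ‖a‖ ^ 2) * (1 - ‖z‖ ^ 2) := by
  simp only [Complex.sq_norm, normSq_apply, sub_re, sub_im, mul_re, mul_im, conj_re, conj_im,
    one_re, one_im]
  ring

theorem one_sub_norm_le_norm_one_sub_conj_mul {a z : ℂ} (hz : ‖z‖ ≤ 1) :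
    1 - ‖a‖ ≤ ‖1 - conj a * z‖ :=
  calc 1 - ‖a‖ ≤ ‖(1 : ℂ)‖ - ‖conj a * z‖ := by
        rw [norm_one, norm_mul, norm_conj]
        nlinarith [norm_nonneg a]
    _ ≤ ‖1 - conj a * z‖ := norm_sub_norm_le _ _

theorem one_sub_conj_mul_ne_zero {a z : ℂ} (ha : ‖a‖ < 1) (hz : ‖z‖ ≤ 1) :
    1 - conj a * z ≠ 0 :=
  norm_pos_iff.mp ((sub_pos.mpr ha).trans_le (one_sub_norm_le_norm_one_sub_conj_mul hz))

theorem one_sub_sq_norm_diskMobius {a z : ℂ} (h : 1 - conj a * z ≠ 0) :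
    1 - ‖diskMobius a z‖ ^ 2 = (1 - ‖a‖ ^ 2) * (1 - ‖z‖ ^ 2) / ‖1 - conj a * z‖ ^ 2 := by
  rw [diskMobius, norm_div, div_pow, one_sub_div (by positivity),
    sq_norm_one_sub_conj_mul_sub_sq_norm_sub]

theorem mapsTo_diskMobius {a : ℂ} (ha : ‖a‖ < 1) :
    Set.MapsTo (diskMobius a) (ball 0 1) (ball 0 1) := by
  intro z hz
  rw [mem_ball_zero_iff] at hz ⊢
  have hden := one_sub_conj_mul_ne_zero ha hz.le
  have : 0 < 1 - ‖diskMobius a z‖ ^ 2 := by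
    rw [one_sub_sq_norm_diskMobius hden]
    have : 0 < 1 - ‖a‖ ^ 2 := by nlinarith [norm_nonneg a]
    have : 0 < 1 - ‖z‖ ^ 2 := by nlinarith [norm_nonneg z]
    positivity
  nlinarith [norm_nonneg (diskMobius a z)]

theorem differentiableOn_diskMobius {a : ℂ} (ha : ‖a‖ < 1) :
    DifferentiableOn ℂ (diskMobius a) (ball 0 1) :=
  ((differentiableOn_id.sub_const a).div ((differentiableOn_const 1).sub
    (differentiableOn_id.const_mul _))) fun _ hz =>
      one_sub_conj_mul_ne_zero ha (mem_ball_zero_iff.mp hz).le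

theorem one_sub_mul_one_sub_sq_norm_le_of_mapsTo_ball {f : ℂ → ℂ}
    (hd : DifferentiableOn ℂ f (ball 0 1)) (hm : Set.MapsTo f (ball 0 1) (ball 0 1))
    {w : ℂ} (hw : w ∈ ball 0 1) :
    (1 - ‖f 0‖) * (1 - ‖w‖ ^ 2) ≤ (1 + ‖f 0‖) * (1 - ‖f w‖ ^ 2) := by
  set a := f 0
  have ha : ‖a‖ < 1 := mem_ball_zero_iff.mp (hm (mem_ball_self one_pos))
  have hfw : ‖f w‖ < 1 := mem_ball_zero_iff.mp (hm hw)
  -- Schwarz lemma for `diskMobius a ∘ f`, which fixes `0`.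
  have hschwarz : ‖diskMobius a (f w)‖ ≤ ‖w‖ :=
    norm_le_norm_of_mapsTo_ball ((differentiableOn_diskMobius ha).comp hd hm)
      (((mapsTo_diskMobius ha).comp hm).mono_right ball_subset_closedBall)
      (by simp [diskMobius, a]) (mem_ball_zero_iff.mp hw)
  have hden := one_sub_norm_le_norm_one_sub_conj_mul (a := a) hfw.le
  have hα : 0 < 1 - ‖a‖ := sub_pos.mpr ha
  have hu : 0 ≤ 1 - ‖f w‖ ^ 2 := by nlinarith [norm_nonneg (f w)]
  have key : 1 - ‖w‖ ^ 2 ≤ (1 - ‖a‖ ^ 2) * (1 - ‖f w‖ ^ 2) / (1 - ‖a‖) ^ 2 :=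
    calc 1 - ‖w‖ ^ 2 ≤ 1 - ‖diskMobius a (f w)‖ ^ 2 := by
          gcongr
      _ = (1 - ‖a‖ ^ 2) * (1 - ‖f w‖ ^ 2) / ‖1 - conj a * f w‖ ^ 2 :=
          one_sub_sq_norm_diskMobius (one_sub_conj_mul_ne_zero ha hfw.le)
      _ ≤ (1 - ‖a‖ ^ 2) * (1 - ‖f w‖ ^ 2) / (1 - ‖a‖) ^ 2 := by
          have : 0 ≤ 1 - ‖a‖ ^ 2 := by nlinarith [norm_nonneg a]
          gcongr
  rw [le_div_iff₀ (by positivity)] at key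
  nlinarith

theorem one_sub_norm_le_mul_one_sub_norm_of_mapsTo_ball {f : ℂ → ℂ}
    (hd : DifferentiableOn ℂ f (ball 0 1)) (hm : Set.MapsTo f (ball 0 1) (ball 0 1))
    {w : ℂ} (hw : w ∈ ball 0 1) :
    1 - ‖w‖ ≤ 2 * (1 + ‖f 0‖) / (1 - ‖f 0‖) * (1 - ‖f w‖) := by
  have hα : 0 < 1 - ‖f 0‖ := sub_pos.mpr (mem_ball_zero_iff.mp (hm (mem_ball_self one_pos)))
  have hw1 : ‖w‖ < 1 := mem_ball_zero_iff.mp hw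
  have hfw : ‖f w‖ < 1 := mem_ball_zero_iff.mp (hm hw)
  have h := one_sub_mul_one_sub_sq_norm_le_of_mapsTo_ball hd hm hw
  rw [div_mul_eq_mul_div, le_div_iff₀ hα]
  have hu : 0 ≤ 1 - ‖f w‖ := by linarith
  nlinarith [mul_nonneg (mul_nonneg hα.le (norm_nonneg w)) (sub_nonneg.mpr hw1.le),
    mul_nonneg (mul_nonneg (by positivity : (0 : ℝ) ≤ 1 + ‖f 0‖) hu) hu]

end Complex

theorem liminf_coe_lt_top_of_eventually_le_mul {ι : Type*} {l : Filter ι} {u v : ι → ℝ} {K : ℝ}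
    (hK : 0 ≤ K) (huv : ∀ᶠ i in l, u i ≤ K * v i)
    (hv : liminf (fun i => (v i : EReal)) l < ⊤) :
    liminf (fun i => (u i : EReal)) l < ⊤ := by
  obtain ⟨x, hvx, -⟩ := EReal.lt_iff_exists_real_btwn.mp hv
  have hfreq : ∃ᶠ i in l, (u i : EReal) ≤ (K * x : ℝ) := by
    refine ((frequently_lt_of_liminf_lt (by isBoundedDefault) hvx).and_eventually huv).mono ?_
    rintro i ⟨hvi, hui⟩
    have hvi : v i ≤ x := (EReal.coe_lt_coe_iff.mp hvi).le
    exact EReal.coe_le_coe_iff.mpr (hui.trans (by gcongr))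
  exact (liminf_le_of_frequently_le hfreq).trans_lt (EReal.coe_lt_top _)

theorem stmt_2_general (ψ₁ ψ₂ : ℂ → ℂ)
    (h₁m : Set.MapsTo ψ₁ {z : ℂ | ‖z‖ < 1} {z : ℂ | ‖z‖ < 1})
    (h₂ : DifferentiableOn ℂ ψ₂ {z : ℂ | ‖z‖ < 1})
    (h₂m : Set.MapsTo ψ₂ {z : ℂ | ‖z‖ < 1} {z : ℂ | ‖z‖ < 1})
    (σ : ℂ)
    (hreg : Filter.liminf
        (fun z => (((1 - ‖ψ₂ (ψ₁ z)‖) / (1 - ‖z‖) : ℝ) : EReal))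
        (nhdsWithin σ {z : ℂ | ‖z‖ < 1}) < ⊤) :
    Filter.liminf
        (fun z => (((1 - ‖ψ₁ z‖) / (1 - ‖z‖) : ℝ) : EReal))
        (nhdsWithin σ {z : ℂ | ‖z‖ < 1}) < ⊤ := by
  rw [← ball_zero_eq] at h₁m h₂ h₂m hreg ⊢
  have hψ₂0 : ‖ψ₂ 0‖ < 1 := mem_ball_zero_iff.mp (h₂m (mem_ball_self one_pos))
  have hK : 0 ≤ 2 * (1 + ‖ψ₂ 0‖) / (1 - ‖ψ₂ 0‖) :=
    div_nonneg (by positivity) (sub_nonneg.mpr hψ₂0.le)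
  refine liminf_coe_lt_top_of_eventually_le_mul hK ?_ hreg
  filter_upwards [self_mem_nhdsWithin] with z hz
  rw [mul_div_assoc']
  gcongr
  · exact sub_nonneg.mpr (mem_ball_zero_iff.mp hz).le
  · exact one_sub_norm_le_mul_one_sub_norm_of_mapsTo_ball h₂ h₂m (h₁m hz)

/-- If `σ ∈ ∂𝔻` is a regular contact point of the composition `ψ₂ ∘ ψ₁` of two
holomorphic self-maps of the unit disk, i.e. the Julia liminf of `ψ₂ ∘ ψ₁` at `σ` is
finite, then `σ` is a regular contact point of `ψ₁`. -/
theorem stmt_2 (ψ₁ ψ₂ : ℂ → ℂ)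
    (h₁ : DifferentiableOn ℂ ψ₁ {z : ℂ | ‖z‖ < 1})
    (h₁m : Set.MapsTo ψ₁ {z : ℂ | ‖z‖ < 1} {z : ℂ | ‖z‖ < 1})
    (h₂ : DifferentiableOn ℂ ψ₂ {z : ℂ | ‖z‖ < 1})
    (h₂m : Set.MapsTo ψ₂ {z : ℂ | ‖z‖ < 1} {z : ℂ | ‖z‖ < 1})
    (σ : ℂ) (hσ : ‖σ‖ = 1)
    (hreg : Filter.liminf
        (fun z => (((1 - ‖ψ₂ (ψ₁ z)‖) / (1 - ‖z‖) : ℝ) : EReal))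
        (nhdsWithin σ {z : ℂ | ‖z‖ < 1}) < ⊤) :
    Filter.liminf
        (fun z => (((1 - ‖ψ₁ z‖) / (1 - ‖z‖) : ℝ) : EReal))
        (nhdsWithin σ {z : ℂ | ‖z‖ < 1}) < ⊤ :=
  stmt_2_general ψ₁ ψ₂ h₁m h₂ h₂m σ hreg
end

section
/- Let Φ : ℂ \ [ξ₁, ξ₂] → ℂ (with ξ₁ < ξ₂ real) be given by the Nevanlinna representation Φ(z) = α + β z + ∫_{[ξ₁,ξ₂]} (1 + t z)/(t − z) dν(t), where α ∈ ℝ, β ≥ 0, and ν is a finite positive Borel measure on [ξ₁, ξ₂]. Suppose Φ(x₂) − Φ(x₁) > ξ₂ − ξ₁ for all real x₁ < ξ₁ and x₂ > ξ₂. Then β ≥ 1, and if β = 1 then ν([ξ₁, ξ₂]) = 0. -/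
/-!
For `x₁ < t < x₂` the kernel `k(t, x) = (1 + t x)/(t - x)` satisfies
`k(t, x₂) - k(t, x₁) = -(x₂ - x₁)(1 + t²)/((x₂ - t)(t - x₁)) ≤ -4/(x₂ - x₁)`,
since `(x₂ - t)(t - x₁) ≤ (x₂ - x₁)²/4`. Taking `x₁ = ξ₁ - ε`, `x₂ = ξ₂ + ε` and writing
`D = ξ₂ - ξ₁`, `M = ν([ξ₁, ξ₂])`, the hypothesis gives `D < (D + 2ε)β - 4M/(D + 2ε)`, and
letting the points approach the support, `ε → 0⁺`, yields `D ≤ Dβ - 4M/D`, i.e. `β ≥ 1 + 4M/D²`.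
-/

open MeasureTheory Filter Topology

lemma nevanlinna_kernel_sub {t x₁ x₂ : ℝ} (h₁ : t ≠ x₁) (h₂ : t ≠ x₂) :
    (1 + t * x₂) / (t - x₂) - (1 + t * x₁) / (t - x₁)
      = -((x₂ - x₁) * (1 + t ^ 2) / ((x₂ - t) * (t - x₁))) := by
  have h₁' : t - x₁ ≠ 0 := sub_ne_zero.mpr h₁
  have h₂' : x₂ - t ≠ 0 := sub_ne_zero.mpr h₂.symm
  have h₂'' : t - x₂ ≠ 0 := sub_ne_zero.mpr h₂
  field_simp
  ring

lemma nevanlinna_kernel_sub_le {t x₁ x₂ : ℝ} (h₁ : x₁ < t) (h₂ : t < x₂) :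
    (1 + t * x₂) / (t - x₂) - (1 + t * x₁) / (t - x₁) ≤ -(4 / (x₂ - x₁)) := by
  rw [nevanlinna_kernel_sub h₁.ne' h₂.ne, neg_le_neg_iff]
  have hL : 0 < x₂ - x₁ := by linarith
  have hprod : 0 < (x₂ - t) * (t - x₁) := mul_pos (by linarith) (by linarith)
  have hamgm : 4 * ((x₂ - t) * (t - x₁)) ≤ (x₂ - x₁) ^ 2 := by
    nlinarith [four_mul_le_sq_add (x₂ - t) (t - x₁)]
  rw [div_le_div_iff₀ hL hprod]
  nlinarith [sq_nonneg t]

lemma integrableOn_nevanlinna_kernel {ν : Measure ℝ} [IsFiniteMeasureOnCompacts ν]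
    {K : Set ℝ} (hK : IsCompact K) {x : ℝ} (hx : x ∉ K) :
    IntegrableOn (fun t => (1 + t * x) / (t - x)) K ν := by
  refine ContinuousOn.integrableOn_compact hK (ContinuousOn.div (by fun_prop) (by fun_prop) ?_)
  intro t ht
  exact sub_ne_zero.mpr (ne_of_mem_of_not_mem ht hx)

lemma integral_nevanlinna_kernel_sub_le (ν : Measure ℝ) [IsFiniteMeasureOnCompacts ν]
    {a b x₁ x₂ : ℝ} (h₁ : x₁ < a) (h₂ : b < x₂) :
    ∫ t in Set.Icc a b, (1 + t * x₂) / (t - x₂) ∂ν - ∫ t in Set.Icc a b, (1 + t * x₁) / (t - x₁) ∂ν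
      ≤ -(4 * ν.real (Set.Icc a b) / (x₂ - x₁)) := by
  have hK : IsCompact (Set.Icc a b) := isCompact_Icc
  have hi₁ := integrableOn_nevanlinna_kernel (ν := ν) hK (Set.notMem_Icc_of_lt h₁)
  have hi₂ := integrableOn_nevanlinna_kernel (ν := ν) hK (Set.notMem_Icc_of_gt h₂)
  have hconst : IntegrableOn (fun _ => -(4 / (x₂ - x₁))) (Set.Icc a b) ν :=
    integrableOn_const hK.measure_lt_top.ne
  calc _ = ∫ t in Set.Icc a b, ((1 + t * x₂) / (t - x₂) - (1 + t * x₁) / (t - x₁)) ∂ν :=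
        (integral_sub hi₂ hi₁).symm
    _ ≤ ∫ _ in Set.Icc a b, -(4 / (x₂ - x₁)) ∂ν :=
        setIntegral_mono_on (hi₂.sub hi₁) hconst measurableSet_Icc fun t ht =>
          nevanlinna_kernel_sub_le (h₁.trans_le ht.1) (ht.2.trans_lt h₂)
    _ = _ := by rw [setIntegral_const, smul_eq_mul]; ring

theorem stmt_4_general (ξ₁ ξ₂ α β : ℝ) (hξ : ξ₁ < ξ₂)
    (ν : Measure ℝ) [IsFiniteMeasure ν]
    (Φ : ℝ → ℝ)
    (hΦ : ∀ x : ℝ, x ∉ Set.Icc ξ₁ ξ₂ →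
      Φ x = α + β * x + ∫ t in Set.Icc ξ₁ ξ₂, (1 + t * x) / (t - x) ∂ν)
    (hgt : ∀ x₁ x₂ : ℝ, x₁ < ξ₁ → ξ₂ < x₂ → ξ₂ - ξ₁ < Φ x₂ - Φ x₁) :
    1 ≤ β ∧ (β = 1 → ν (Set.Icc ξ₁ ξ₂) = 0) := by
  set D := ξ₂ - ξ₁
  set M := ν.real (Set.Icc ξ₁ ξ₂)
  have hD : 0 < D := sub_pos.mpr hξ
  have hbound : ∀ ε > 0, D < (D + 2 * ε) * β - 4 * M / (D + 2 * ε) := by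
    intro ε hε
    have h₁ : ξ₁ - ε < ξ₁ := by linarith
    have h₂ : ξ₂ < ξ₂ + ε := by linarith
    have hgap := hgt _ _ h₁ h₂
    rw [hΦ _ (Set.notMem_Icc_of_lt h₁), hΦ _ (Set.notMem_Icc_of_gt h₂)] at hgap
    have hint := integral_nevanlinna_kernel_sub_le ν h₁ h₂
    rw [show ξ₂ + ε - (ξ₁ - ε) = D + 2 * ε by ring] at hint
    linear_combination hgap + hint
  have hlim : D ≤ D * β - 4 * M / D := by
    have hcont : ContinuousAt (fun ε => (D + 2 * ε) * β - 4 * M / (D + 2 * ε)) 0 :=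
      ContinuousAt.sub (by fun_prop) (continuousAt_const.div (by fun_prop) (by simpa using hD.ne'))
    simpa using ge_of_tendsto (x := 𝓝[>] 0) (hcont.tendsto.mono_left nhdsWithin_le_nhds)
      (eventually_nhdsWithin_of_forall fun ε hε => (hbound ε hε).le)
  have hMD : 0 ≤ 4 * M / D := by positivity
  refine ⟨by nlinarith, fun hβ => ?_⟩
  have hM : M = 0 := by
    subst hβ
    have : 4 * M / D = 0 := by linarith
    simpa [hD.ne'] using this
  exact (measureReal_eq_zero_iff (measure_ne_top ν _)).mp hM

/-- Nevanlinna representation with measure supported on `[ξ₁, ξ₂]`: if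
`Φ(x₂) − Φ(x₁) > ξ₂ − ξ₁` for all `x₁ < ξ₁ < ξ₂ < x₂`, then `β ≥ 1`, with `β = 1`
forcing `ν([ξ₁,ξ₂]) = 0`. -/
theorem stmt_4 (ξ₁ ξ₂ α β : ℝ) (hξ : ξ₁ < ξ₂) (hβ : 0 ≤ β)
    (ν : Measure ℝ) [IsFiniteMeasure ν]
    (Φ : ℝ → ℝ)
    (hΦ : ∀ x : ℝ, x ∉ Set.Icc ξ₁ ξ₂ →
      Φ x = α + β * x + ∫ t in Set.Icc ξ₁ ξ₂, (1 + t * x) / (t - x) ∂ν)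
    (hgt : ∀ x₁ x₂ : ℝ, x₁ < ξ₁ → ξ₂ < x₂ → ξ₂ - ξ₁ < Φ x₂ - Φ x₁) :
    1 ≤ β ∧ (β = 1 → ν (Set.Icc ξ₁ ξ₂) = 0) :=
  stmt_4_general ξ₁ ξ₂ α β hξ ν Φ hΦ hgt
end

section
/- Let Φ(z) = α + β z + ∫_{ℝ \ (ξ₁,ξ₂)} (1 + t z)/(t − z) dν(t), where ξ₁ < ξ₂ are real, α ∈ ℝ, β ≥ 0, and ν is a finite positive Borel measure on ℝ \ (ξ₁, ξ₂), with the integral converging for z ∈ (ξ₁, ξ₂). Suppose Φ(x₂) − Φ(x₁) < ξ₂ − ξ₁ whenever ξ₁ < x₁ < x₂ < ξ₂. Then β ≤ 1, and β = 1 implies ν(ℝ \ (ξ₁, ξ₂)) = 0. -/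
/-!
For `ξ₁ < x₁ < x₂ < ξ₂` the increment of `Φ` is
`Φ(x₂) − Φ(x₁) = (x₂ − x₁) [β + ∫ (1 + t²) / ((t − x₁)(t − x₂)) dν(t)]`, and the integrand is
bounded below by a constant `c > 0` independent of `x₁, x₂` because `t` stays outside `(ξ₁, ξ₂)`.
Hence `(β + c ν(ℝ \ (ξ₁, ξ₂))) (x₂ − x₁) < ξ₂ − ξ₁`, and letting `x₂ − x₁ → ξ₂ − ξ₁` gives
`β + c ν(ℝ \ (ξ₁, ξ₂)) ≤ 1`.
-/

open MeasureTheory Set Filter Topology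

noncomputable def nevanlinnaKernel (x t : ℝ) : ℝ := (1 + t * x) / (t - x)

lemma nevanlinnaKernel_sub_nevanlinnaKernel {t x₁ x₂ : ℝ} (h₁ : t - x₁ ≠ 0) (h₂ : t - x₂ ≠ 0) :
    nevanlinnaKernel x₂ t - nevanlinnaKernel x₁ t =
      (x₂ - x₁) * ((1 + t ^ 2) / ((t - x₁) * (t - x₂))) := by
  unfold nevanlinnaKernel
  field_simp
  ring

lemma mul_sub_pos_of_notMem_Ioo {a b t x₁ x₂ : ℝ} (ht : t ∉ Ioo a b) (h₁ : x₁ ∈ Ioo a b)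
    (h₂ : x₂ ∈ Ioo a b) : 0 < (t - x₁) * (t - x₂) := by
  rcases le_or_gt t a with hta | hat
  · exact mul_pos_of_neg_of_neg (by linarith [h₁.1]) (by linarith [h₂.1])
  · have htb : b ≤ t := not_lt.1 fun h => ht ⟨hat, h⟩
    exact mul_pos (by linarith [h₁.2]) (by linarith [h₂.2])

lemma mul_sub_le_of_abs_le {t x₁ x₂ M : ℝ} (h₁ : |x₁| ≤ M) (h₂ : |x₂| ≤ M) :
    (t - x₁) * (t - x₂) ≤ 2 * (1 + M ^ 2) * (1 + t ^ 2) :=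
  calc (t - x₁) * (t - x₂) ≤ |t - x₁| * |t - x₂| := by rw [← abs_mul]; exact le_abs_self _
    _ ≤ (|t| + M) * (|t| + M) := by
        have h : ∀ x, |x| ≤ M → |t - x| ≤ |t| + M := fun x hx => (abs_sub _ _).trans (by gcongr)
        exact mul_le_mul (h x₁ h₁) (h x₂ h₂) (abs_nonneg _)
          (by linarith [abs_nonneg t, abs_nonneg x₁])
    _ ≤ 2 * (1 + M ^ 2) * (1 + t ^ 2) := by
        nlinarith [sq_nonneg (|t| - M), sq_abs t, sq_nonneg t, sq_nonneg M, sq_nonneg (t * M)]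

lemma exists_pos_le_div_mul_sub (a b : ℝ) :
    ∃ c > 0, ∀ t ∉ Ioo a b, ∀ x₁ ∈ Ioo a b, ∀ x₂ ∈ Ioo a b,
      c ≤ (1 + t ^ 2) / ((t - x₁) * (t - x₂)) := by
  set M := max |a| |b|
  refine ⟨1 / (2 * (1 + M ^ 2)), by positivity, fun t ht x₁ h₁ x₂ h₂ => ?_⟩
  have hM : ∀ x ∈ Ioo a b, |x| ≤ M := fun x hx => abs_le_max_abs_abs hx.1.le hx.2.le
  rw [div_le_div_iff₀ (by positivity) (mul_sub_pos_of_notMem_Ioo ht h₁ h₂), one_mul,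
    mul_comm (1 + t ^ 2)]
  exact mul_sub_le_of_abs_le (hM x₁ h₁) (hM x₂ h₂)

lemma mul_measureReal_le_setIntegral_sub {ν : Measure ℝ} [IsFiniteMeasure ν] {a b c x₁ x₂ : ℝ}
    (hc : ∀ t ∉ Ioo a b, c ≤ (1 + t ^ 2) / ((t - x₁) * (t - x₂)))
    (h₁ : x₁ ∈ Ioo a b) (h₂ : x₂ ∈ Ioo a b) (h₁₂ : x₁ ≤ x₂)
    (hi₁ : IntegrableOn (nevanlinnaKernel x₁) (Ioo a b)ᶜ ν)
    (hi₂ : IntegrableOn (nevanlinnaKernel x₂) (Ioo a b)ᶜ ν) :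
    (x₂ - x₁) * (c * ν.real (Ioo a b)ᶜ) ≤
      (∫ t in (Ioo a b)ᶜ, nevanlinnaKernel x₂ t ∂ν) -
        ∫ t in (Ioo a b)ᶜ, nevanlinnaKernel x₁ t ∂ν := by
  rw [← integral_sub hi₂ hi₁, ← mul_assoc]
  refine setIntegral_ge_of_const_le_real measurableSet_Ioo.compl (measure_ne_top _ _)
    (fun t ht => ?_) (hi₂.sub hi₁)
  have hpos := mul_sub_pos_of_notMem_Ioo ht h₁ h₂
  rw [nevanlinnaKernel_sub_nevanlinnaKernel (left_ne_zero_of_mul hpos.ne')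
    (right_ne_zero_of_mul hpos.ne')]
  exact mul_le_mul_of_nonneg_left (hc t ht) (sub_nonneg.2 h₁₂)

lemma le_one_of_forall_mul_sub_lt {a b K : ℝ} (hab : a < b)
    (h : ∀ x₁ x₂, a < x₁ → x₁ < x₂ → x₂ < b → K * (x₂ - x₁) < b - a) : K ≤ 1 := by
  have hlim : Tendsto (fun ε => K * (b - ε - (a + ε))) (𝓝[>] 0) (𝓝 (K * (b - a))) := by
    have hcont : Continuous fun ε : ℝ => K * (b - ε - (a + ε)) := by fun_prop
    simpa using (hcont.tendsto 0).mono_left nhdsWithin_le_nhds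
  have hev : ∀ᶠ ε in 𝓝[>] (0 : ℝ), K * (b - ε - (a + ε)) ≤ b - a := by
    filter_upwards [Ioo_mem_nhdsGT (half_pos (sub_pos.2 hab))] with ε hε
    exact (h _ _ (by linarith [hε.1]) (by linarith [hε.2]) (by linarith [hε.1])).le
  have := le_of_tendsto hlim hev
  nlinarith

theorem stmt_5_general (ξ₁ ξ₂ α β : ℝ) (hξ : ξ₁ < ξ₂)
    (ν : Measure ℝ) [IsFiniteMeasure ν]
    (hint : ∀ x ∈ Set.Ioo ξ₁ ξ₂,
      IntegrableOn (fun t : ℝ => (1 + t * x) / (t - x)) (Set.Ioo ξ₁ ξ₂)ᶜ ν)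
    (Φ : ℝ → ℝ)
    (hΦ : ∀ x ∈ Set.Ioo ξ₁ ξ₂,
      Φ x = α + β * x + ∫ t in (Set.Ioo ξ₁ ξ₂)ᶜ, (1 + t * x) / (t - x) ∂ν)
    (hlt : ∀ x₁ x₂ : ℝ, ξ₁ < x₁ → x₁ < x₂ → x₂ < ξ₂ → Φ x₂ - Φ x₁ < ξ₂ - ξ₁) :
    β ≤ 1 ∧ (β = 1 → ν (Set.Ioo ξ₁ ξ₂)ᶜ = 0) := by
  obtain ⟨c, hc, hker⟩ := exists_pos_le_div_mul_sub ξ₁ ξ₂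
  have hK : β + c * ν.real (Ioo ξ₁ ξ₂)ᶜ ≤ 1 := by
    refine le_one_of_forall_mul_sub_lt hξ fun x₁ x₂ h₁ h₁₂ h₂ => ?_
    have hx₁ : x₁ ∈ Ioo ξ₁ ξ₂ := ⟨h₁, h₁₂.trans h₂⟩
    have hx₂ : x₂ ∈ Ioo ξ₁ ξ₂ := ⟨h₁.trans h₁₂, h₂⟩
    have hgain := mul_measureReal_le_setIntegral_sub (fun t ht => hker t ht x₁ hx₁ x₂ hx₂)
      hx₁ hx₂ h₁₂.le (hint x₁ hx₁) (hint x₂ hx₂)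
    have hinc := hlt x₁ x₂ h₁ h₁₂ h₂
    rw [hΦ x₂ hx₂, hΦ x₁ hx₁] at hinc
    unfold nevanlinnaKernel at hgain
    linarith
  have hmass : 0 ≤ c * ν.real (Ioo ξ₁ ξ₂)ᶜ := by positivity
  refine ⟨by linarith, fun hβ => ?_⟩
  rw [← measureReal_eq_zero_iff]
  exact (mul_eq_zero.1 (by linarith)).resolve_left hc.ne'

/-- Nevanlinna representation with measure supported on `ℝ \ (ξ₁, ξ₂)`: if
`Φ(x₂) − Φ(x₁) < ξ₂ − ξ₁` whenever `ξ₁ < x₁ < x₂ < ξ₂`, then `β ≤ 1`, with `β = 1`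
forcing `ν(ℝ \ (ξ₁,ξ₂)) = 0`. -/
theorem stmt_5 (ξ₁ ξ₂ α β : ℝ) (hξ : ξ₁ < ξ₂) (hβ : 0 ≤ β)
    (ν : Measure ℝ) [IsFiniteMeasure ν]
    (hint : ∀ x ∈ Set.Ioo ξ₁ ξ₂,
      IntegrableOn (fun t : ℝ => (1 + t * x) / (t - x)) (Set.Ioo ξ₁ ξ₂)ᶜ ν)
    (Φ : ℝ → ℝ)
    (hΦ : ∀ x ∈ Set.Ioo ξ₁ ξ₂,
      Φ x = α + β * x + ∫ t in (Set.Ioo ξ₁ ξ₂)ᶜ, (1 + t * x) / (t - x) ∂ν)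
    (hlt : ∀ x₁ x₂ : ℝ, ξ₁ < x₁ → x₁ < x₂ → x₂ < ξ₂ → Φ x₂ - Φ x₁ < ξ₂ - ξ₁) :
    β ≤ 1 ∧ (β = 1 → ν (Set.Ioo ξ₁ ξ₂)ᶜ = 0) :=
  stmt_5_general ξ₁ ξ₂ α β hξ ν hint Φ hΦ hlt
end

section
/- Let a, b : [0,∞) → (0,∞) satisfy: (i) b(t)/b(s) ≤ 1 and (a(t)/a(s))·(b(t)/b(s)) ≥ 1 for all 0 ≤ s ≤ t; (ii) a is locally absolutely continuous. Then b is locally absolutely continuous on [0,∞). -/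
/-- `f` is absolutely continuous on the interval `[A, B]`. -/
def AbsolutelyContinuousOnIcc (f : ℝ → ℝ) (A B : ℝ) : Prop :=
  ∀ ε > (0:ℝ), ∃ δ > (0:ℝ), ∀ (k : ℕ) (a b : Fin k → ℝ),
    (∀ i, a i ∈ Set.Icc A B ∧ b i ∈ Set.Icc A B ∧ a i ≤ b i) →
    (Pairwise fun i j => Disjoint (Set.Ioo (a i) (b i)) (Set.Ioo (a j) (b j))) →
    (∑ i, (b i - a i)) < δ → (∑ i, |f (b i) - f (a i)|) < ε

/-- `f` is locally absolutely continuous on `[0, ∞)`. -/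
def LocAC (f : ℝ → ℝ) : Prop := ∀ T > (0:ℝ), AbsolutelyContinuousOnIcc f 0 T

/-!
Condition (i) says that `b` is nonincreasing and `a * b` is nondecreasing on `[0, ∞)`, hence so is
`a`. For `s ≤ t` this gives `a s * (b s - b t) ≤ b t * (a t - a s)`, and bounding `b t ≤ b 0`,
`a 0 ≤ a s` makes `b` Lipschitz with respect to `a`: `|b t - b s| ≤ (b 0 / a 0) * |a t - a s|`.
Such a bound transfers absolute continuity from `a` to `b`.
-/

theorem AbsolutelyContinuousOnIcc.of_abs_sub_le_mul {f g : ℝ → ℝ} {A B C : ℝ}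
    (hf : AbsolutelyContinuousOnIcc f A B) (hC : 0 ≤ C)
    (hgf : ∀ s t, s ∈ Set.Icc A B → s ≤ t → |g t - g s| ≤ C * |f t - f s|) :
    AbsolutelyContinuousOnIcc g A B := by
  intro ε hε
  have hC1 : 0 < C + 1 := by linarith
  obtain ⟨δ, hδ, hfδ⟩ := hf (ε / (C + 1)) (div_pos hε hC1)
  refine ⟨δ, hδ, fun k l r hlr hdisj hsum => ?_⟩
  calc ∑ i, |g (r i) - g (l i)|
      ≤ ∑ i, (C + 1) * |f (r i) - f (l i)| := Finset.sum_le_sum fun i _ =>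
        (hgf _ _ (hlr i).1 (hlr i).2.2).trans
          (mul_le_mul_of_nonneg_right (by linarith) (abs_nonneg _))
    _ = (C + 1) * ∑ i, |f (r i) - f (l i)| := (Finset.mul_sum ..).symm
    _ < (C + 1) * (ε / (C + 1)) := mul_lt_mul_of_pos_left (hfδ k l r hlr hdisj hsum) hC1
    _ = ε := mul_div_cancel₀ ε hC1.ne'

theorem sub_le_div_mul_sub_of_mul_le_mul {x y u v x₀ u₀ : ℝ} (hx₀ : 0 < x₀) (hx₀x : x₀ ≤ x)
    (hv : 0 < v) (hvu : v ≤ u) (hvu₀ : v ≤ u₀) (h : x * u ≤ y * v) :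
    u - v ≤ u₀ / x₀ * (y - x) := by
  have hxy : x ≤ y := le_of_mul_le_mul_right (by nlinarith) hv
  rw [div_mul_eq_mul_div, le_div_iff₀ hx₀]
  nlinarith [mul_le_mul_of_nonneg_right hvu₀ (sub_nonneg.mpr hxy),
    mul_le_mul_of_nonneg_right hx₀x (sub_nonneg.mpr hvu)]

theorem MonotoneOn.of_mul_of_antitoneOn {a b : ℝ → ℝ} {S : Set ℝ}
    (ha : ∀ t ∈ S, 0 ≤ a t) (hb : ∀ t ∈ S, 0 < b t)
    (hb_anti : AntitoneOn b S) (hab_mono : MonotoneOn (a * b) S) : MonotoneOn a S :=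
  fun s hs t ht hst => le_of_mul_le_mul_right
    ((hab_mono hs ht hst).trans (mul_le_mul_of_nonneg_left (hb_anti hs ht hst) (ha t ht)))
    (hb s hs)

theorem abs_sub_le_of_antitoneOn_of_monotoneOn_mul {a b : ℝ → ℝ}
    (ha : ∀ t, 0 ≤ t → 0 < a t) (hb : ∀ t, 0 ≤ t → 0 < b t)
    (hb_anti : AntitoneOn b (Set.Ici 0)) (hab_mono : MonotoneOn (a * b) (Set.Ici 0))
    {s t : ℝ} (hs : 0 ≤ s) (hst : s ≤ t) :
    |b t - b s| ≤ b 0 / a 0 * |a t - a s| := by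
  have ht : 0 ≤ t := hs.trans hst
  have h0 : (0 : ℝ) ∈ Set.Ici 0 := Set.self_mem_Ici
  have ha_mono : MonotoneOn a (Set.Ici 0) :=
    .of_mul_of_antitoneOn (fun t ht => (ha t ht).le) hb hb_anti hab_mono
  have hbts : b t ≤ b s := hb_anti hs ht hst
  rw [abs_of_nonpos (sub_nonpos.mpr hbts), abs_of_nonneg (sub_nonneg.mpr (ha_mono hs ht hst)),
    neg_sub]
  exact sub_le_div_mul_sub_of_mul_le_mul (ha 0 le_rfl) (ha_mono h0 hs hs) (hb t ht) hbts
    (hb_anti h0 ht ht) (hab_mono hs ht hst)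

/-- If positive functions `a, b` on `[0,∞)` satisfy `b(t)/b(s) ≤ 1` and
`(a(t)/a(s))·(b(t)/b(s)) ≥ 1` for all `0 ≤ s ≤ t`, and `a` is locally absolutely
continuous, then `b` is locally absolutely continuous. -/
theorem stmt_9 (a b : ℝ → ℝ)
    (ha : ∀ t : ℝ, 0 ≤ t → 0 < a t) (hb : ∀ t : ℝ, 0 ≤ t → 0 < b t)
    (h1 : ∀ s t : ℝ, 0 ≤ s → s ≤ t →
      b t / b s ≤ 1 ∧ 1 ≤ (a t / a s) * (b t / b s))
    (h2 : LocAC a) :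
    LocAC b := by
  have hb_anti : AntitoneOn b (Set.Ici 0) := fun s hs t _ hst =>
    (div_le_one (hb s hs)).mp (h1 s t hs hst).1
  have hab_mono : MonotoneOn (a * b) (Set.Ici 0) := fun s hs t _ hst => by
    have h := (h1 s t hs hst).2
    rwa [div_mul_div_comm, one_le_div (mul_pos (ha s hs) (hb s hs))] at h
  intro T hT
  exact (h2 T hT).of_abs_sub_le_mul (div_pos (hb 0 le_rfl) (ha 0 le_rfl)).le
    fun s t hs hst => abs_sub_le_of_antitoneOn_of_monotoneOn_mul ha hb hb_anti hab_mono hs.1 hst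
end

section
/- Let φ ∈ Hol(𝔻,𝔻) and suppose there exist A > 0 and points σ, ω ∈ ∂𝔻 such that |ω − φ(z)|²/(1 − |φ(z)|²) ≤ A·|σ − z|²/(1 − |z|²) for all z ∈ 𝔻. Then liminf_{z→σ} (1 − |φ(z)|)/(1 − |z|) ≤ A; in particular this liminf is finite. -/
open Filter Topology

/-!
Along the radius `z = rσ` the right-hand side of Julia's inequality equals `A (1 - r)/(1 + r)`,
while `|ω - φ(z)| ≥ 1 - |φ(z)|` bounds the left-hand side below by `(1 - |φ(z)|)/(1 + |φ(z)|)`.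
Since `|φ(z)| < 1`, this gives `(1 - |φ(rσ)|)/(1 - r) ≤ 2A/(1 + r)`, which tends to `A` as
`r → 1⁻`; the liminf over the disk is at most the liminf along the radius.
-/

lemma one_sub_sq_div_one_sub_sq {x : ℝ} (hx : x < 1) :
    (1 - x) ^ 2 / (1 - x ^ 2) = (1 - x) / (1 + x) := by
  rw [show 1 - x ^ 2 = (1 - x) * (1 + x) by ring, sq, mul_div_mul_left _ _ (by linarith)]

lemma one_sub_norm_div_one_add_norm_le {ω w : ℂ} (hω : ‖ω‖ = 1) (hw : ‖w‖ < 1) :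
    (1 - ‖w‖) / (1 + ‖w‖) ≤ ‖ω - w‖ ^ 2 / (1 - ‖w‖ ^ 2) := by
  have hdist : 1 - ‖w‖ ≤ ‖ω - w‖ := by simpa [hω] using norm_sub_norm_le ω w
  rw [← one_sub_sq_div_one_sub_sq hw]
  gcongr
  nlinarith [norm_nonneg w]

lemma norm_sub_ofReal_mul_sq_div {σ : ℂ} (hσ : ‖σ‖ = 1) {r : ℝ} (hr₀ : 0 ≤ r) (hr₁ : r < 1) :
    ‖σ - r * σ‖ ^ 2 / (1 - ‖(r : ℂ) * σ‖ ^ 2) = (1 - r) / (1 + r) := by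
  have hsub : σ - r * σ = ((1 - r : ℝ) : ℂ) * σ := by push_cast; ring
  rw [hsub, norm_mul, norm_mul, hσ, Complex.norm_real, Complex.norm_real, Real.norm_of_nonneg hr₀,
    Real.norm_of_nonneg (by linarith), mul_one, mul_one]
  exact one_sub_sq_div_one_sub_sq hr₁

lemma one_sub_div_one_sub_le_two_mul_div {A m r : ℝ} (hA : 0 ≤ A) (hm₀ : 0 ≤ m) (hm₁ : m < 1)
    (hr₀ : 0 ≤ r) (hr₁ : r < 1) (h : (1 - m) / (1 + m) ≤ A * ((1 - r) / (1 + r))) :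
    (1 - m) / (1 - r) ≤ 2 * A / (1 + r) := by
  have hr : 0 < 1 - r := by linarith
  calc (1 - m) / (1 - r) = (1 - m) / (1 + m) * ((1 + m) / (1 - r)) := by field_simp
    _ ≤ A * ((1 - r) / (1 + r)) * ((1 + m) / (1 - r)) := by gcongr
    _ = A * (1 + m) / (1 + r) := by field_simp
    _ ≤ 2 * A / (1 + r) := div_le_div_of_nonneg_right (by nlinarith) (by linarith)

lemma tendsto_ofReal_mul_nhdsWithin_unitDisk {σ : ℂ} (hσ : ‖σ‖ = 1) :
    Tendsto (fun r : ℝ => (r : ℂ) * σ) (𝓝[<] 1) (𝓝[{z : ℂ | ‖z‖ < 1}] σ) := by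
  refine tendsto_nhdsWithin_of_tendsto_nhds_of_eventually_within _ ?_ ?_
  · have h : Tendsto (fun r : ℝ => (r : ℂ) * σ) (𝓝 1) (𝓝 (((1 : ℝ) : ℂ) * σ)) :=
      (Complex.continuous_ofReal.mul continuous_const).tendsto 1
    simpa using h.mono_left nhdsWithin_le_nhds
  · filter_upwards [Ioo_mem_nhdsLT (show (-1 : ℝ) < 1 by norm_num)] with r hr
    simpa [hσ, abs_lt] using hr

theorem stmt_12_general (φ : ℂ → ℂ)
    (hmap : Set.MapsTo φ {z : ℂ | ‖z‖ < 1} {z : ℂ | ‖z‖ < 1})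
    (A : ℝ) (hA : 0 < A) (σ ω : ℂ) (hσ : ‖σ‖ = 1) (hω : ‖ω‖ = 1)
    (hJulia : ∀ z : ℂ, ‖z‖ < 1 →
      (‖ω - φ z‖)^2 / (1 - (‖φ z‖)^2) ≤
        A * ((‖σ - z‖)^2 / (1 - (‖z‖)^2))) :
    Filter.liminf
        (fun z => (((1 - ‖φ z‖) / (1 - ‖z‖) : ℝ) : EReal))
        (nhdsWithin σ {z : ℂ | ‖z‖ < 1}) ≤ (A : EReal) := by
  have hradial : ∀ᶠ r : ℝ in 𝓝[<] 1,
      (1 - ‖φ (r * σ)‖) / (1 - ‖(r : ℂ) * σ‖) ≤ 2 * A / (1 + r) := by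
    filter_upwards [Ioo_mem_nhdsLT (show (0 : ℝ) < 1 by norm_num)] with r ⟨hr₀, hr₁⟩
    have hnorm : ‖(r : ℂ) * σ‖ = r := by simp [hσ, hr₀.le]
    have hz : ‖(r : ℂ) * σ‖ < 1 := by rw [hnorm]; exact hr₁
    have hjulia := (one_sub_norm_div_one_add_norm_le hω (hmap hz)).trans (hJulia _ hz)
    rw [norm_sub_ofReal_mul_sq_div hσ hr₀.le hr₁] at hjulia
    rw [hnorm]
    exact one_sub_div_one_sub_le_two_mul_div hA.le (norm_nonneg _) (hmap hz) hr₀.le hr₁ hjulia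
  have hlim : Tendsto (fun r : ℝ => ((2 * A / (1 + r) : ℝ) : EReal)) (𝓝[<] 1) (𝓝 (A : EReal)) := by
    rw [EReal.tendsto_coe]
    have h : Tendsto (fun r : ℝ => 2 * A / (1 + r)) (𝓝 1) (𝓝 (2 * A / (1 + 1))) :=
      tendsto_const_nhds.div (tendsto_const_nhds.add tendsto_id) (by norm_num)
    convert h.mono_left nhdsWithin_le_nhds using 2
    ring
  calc liminf (fun z => (((1 - ‖φ z‖) / (1 - ‖z‖) : ℝ) : EReal)) (𝓝[{z : ℂ | ‖z‖ < 1}] σ)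
      ≤ liminf (fun r : ℝ => (((1 - ‖φ (r * σ)‖) / (1 - ‖(r : ℂ) * σ‖) : ℝ) : EReal)) (𝓝[<] 1) :=
        (tendsto_ofReal_mul_nhdsWithin_unitDisk hσ).liminf_le_liminf_comp
    _ ≤ liminf (fun r : ℝ => ((2 * A / (1 + r) : ℝ) : EReal)) (𝓝[<] 1) :=
        liminf_le_liminf (hradial.mono fun r hr => EReal.coe_le_coe_iff.mpr hr)
    _ = (A : EReal) := hlim.liminf_eq

/-- Julia's inequality with constant `A` at `σ` implies the boundary dilation
coefficient `liminf_{z→σ}(1−|φ(z)|)/(1−|z|)` is at most `A`; in particular it is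
finite. -/
theorem stmt_12 (φ : ℂ → ℂ)
    (hφ : DifferentiableOn ℂ φ {z : ℂ | ‖z‖ < 1})
    (hmap : Set.MapsTo φ {z : ℂ | ‖z‖ < 1} {z : ℂ | ‖z‖ < 1})
    (A : ℝ) (hA : 0 < A) (σ ω : ℂ) (hσ : ‖σ‖ = 1) (hω : ‖ω‖ = 1)
    (hJulia : ∀ z : ℂ, ‖z‖ < 1 →
      (‖ω - φ z‖)^2 / (1 - (‖φ z‖)^2) ≤
        A * ((‖σ - z‖)^2 / (1 - (‖z‖)^2))) :
    Filter.liminf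
        (fun z => (((1 - ‖φ z‖) / (1 - ‖z‖) : ℝ) : EReal))
        (nhdsWithin σ {z : ℂ | ‖z‖ < 1}) ≤ (A : EReal) :=
  stmt_12_general φ hmap A hA σ ω hσ hω hJulia
end
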